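/- Let G be an infinite, connected, locally finite simple graph with exactly one end and let T be a spanning tree of G. Assume that: (i) every vertex has degree at least 2 in T; (ii) every edge of T lies in infinitely many fundamental cycles with respect to T; and (iii) every vertex whose degree in T is exactly 2 is incident to some edge f of G not in T whose fundamental cycle with respect to T contains a vertex of T-degree at least 3. Then G is 3-edge-connected: for all vertices u, v and all edges e, f of G, the vertex v is reachable from u in the graph obtained from G by deleting e and f. -/

import Mathlib

/-!
It suffices that for every tree edge `ab` and every edge `f` of `G`, the vertices `a` and `b` stay
connected in `G - {ab, f}`: the tree then connects everything. Among the infinitely many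
fundamental cycles through `ab`, take one whose non-tree edge is not `f`. If it avoids `f`, it
reconnects `a` and `b`. Otherwise `f = cd` is a tree edge on it, and `T - {ab, cd}` consists of
two outer pieces, joined by the non-tree edge, and a middle piece. If `a` and `b` were separated,
the middle piece and the union of the outer ones would be the two components of `G - {ab, cd}`.
Both are infinite: counting degrees, a finite subtree left by a single tree edge has a vertex of
tree-degree 1, and one left by two tree edges is a path of tree-degree-2 vertices, which (iii)
forbids. Two infinite components separated by finitely many edges give two ends.
-/

open SimpleGraph

namespace SimpleGraph

variable {V : Type*}

theorem Walk.exists_edges_eq_append_cons {G : SimpleGraph V} {x y : V} {e : Sym2 V}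
    (p : G.Walk x y) (h : e ∈ p.edges) :
    ∃ (u v : V) (q : G.Walk x u) (r : G.Walk v y),
      e = s(u, v) ∧ p.edges = q.edges ++ e :: r.edges := by
  induction p with
  | nil => simp at h
  | @cons x z y hadj p ih =>
    rw [Walk.edges_cons, List.mem_cons] at h
    rcases h with rfl | h
    · exact ⟨x, z, .nil, p, rfl, rfl⟩
    · obtain ⟨u, v, q, r, rfl, hqr⟩ := ih h
      exact ⟨u, v, .cons hadj q, r, rfl, by simp [hqr]⟩

theorem Walk.reachable_deleteEdges_or_exists {G : SimpleGraph V} (S : Set (Sym2 V)) {v w : V}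
    (p : G.Walk v w) :
    (G.deleteEdges S).Reachable v w ∨
      ∃ x y, s(x, y) ∈ S ∧ (G.deleteEdges S).Reachable v x := by
  induction p with
  | nil => exact Or.inl .rfl
  | @cons u u' w hadj p ih =>
    by_cases hS : s(u, u') ∈ S
    · exact Or.inr ⟨u, u', hS, .rfl⟩
    · have hadj' : (G.deleteEdges S).Adj u u' := (deleteEdges_adj ..).mpr ⟨hadj, hS⟩
      rcases ih with h | ⟨x, y, hxy, h⟩
      exacts [Or.inl (hadj'.reachable.trans h), Or.inr ⟨x, y, hxy, hadj'.reachable.trans h⟩]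

theorem reachable_deleteEdges_of_mem_edges {G T : SimpleGraph V} (hTG : T ≤ G)
    {S : Set (Sym2 V)} {x y a b : V} (p : T.Walk x y) (hp : p.edges.Nodup)
    (hab : s(a, b) ∈ p.edges) (hS : ∀ t ∈ p.edges, t ∈ S → t = s(a, b))
    (hxy : (G.deleteEdges S).Reachable x y) : (G.deleteEdges S).Reachable a b := by
  obtain ⟨u, v, q, r, huv, hqr⟩ := p.exists_edges_eq_append_cons hab
  rw [hqr] at hp hS
  have hxu : (G.deleteEdges S).Reachable x u :=
    (q.toDeleteEdges S (by grind)).reachable.mono (deleteEdges_mono hTG)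
  have hvy : (G.deleteEdges S).Reachable v y :=
    (r.toDeleteEdges S (by grind)).reachable.mono (deleteEdges_mono hTG)
  have huv' := hxu.symm.trans (hxy.trans hvy.symm)
  rcases Sym2.eq_iff.mp huv with ⟨rfl, rfl⟩ | ⟨rfl, rfl⟩
  exacts [huv', huv'.symm]

theorem Walk.exists_reachable_deleteEdges_pair {T : SimpleGraph V} {x y : V} {e f : Sym2 V}
    (p : T.Walk x y) (hp : p.edges.Nodup) (he : e ∈ p.edges) (hf : f ∈ p.edges)
    (hef : e ≠ f) :
    ∃ a b c d : V, e = s(a, b) ∧ f = s(c, d) ∧ (T.deleteEdges {e, f}).Reachable b c ∧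
      ((T.deleteEdges {e, f}).Reachable x a ∧ (T.deleteEdges {e, f}).Reachable d y ∨
        (T.deleteEdges {e, f}).Reachable y a ∧ (T.deleteEdges {e, f}).Reachable d x) := by
  obtain ⟨u, v, q, r, rfl, hqr⟩ := p.exists_edges_eq_append_cons he
  rw [hqr] at hp hf
  have hfqr : f ∈ q.edges ∨ f ∈ r.edges := by grind
  rcases hfqr with hfq | hfr
  · obtain ⟨c, d, q₁, q₂, rfl, hq⟩ := q.exists_edges_eq_append_cons hfq
    rw [hq] at hp
    refine ⟨v, u, d, c, Sym2.eq_swap, Sym2.eq_swap, ?_, Or.inr ⟨?_, ?_⟩⟩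
    · exact (q₂.toDeleteEdges _ (by grind)).reachable.symm
    · exact (r.toDeleteEdges _ (by grind)).reachable.symm
    · exact (q₁.toDeleteEdges _ (by grind)).reachable.symm
  · obtain ⟨c, d, r₁, r₂, rfl, hr⟩ := r.exists_edges_eq_append_cons hfr
    rw [hr] at hp
    refine ⟨u, v, c, d, rfl, rfl, ?_, Or.inl ⟨?_, ?_⟩⟩
    · exact (r₁.toDeleteEdges _ (by grind)).reachable
    · exact (q.toDeleteEdges _ (by grind)).reachable
    · exact (r₂.toDeleteEdges _ (by grind)).reachable

theorem Reachable.of_forall_adj {G H : SimpleGraph V} (h : ∀ x y, G.Adj x y → H.Reachable x y)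
    {u v : V} (huv : G.Reachable u v) : H.Reachable u v := by
  obtain ⟨p⟩ := huv
  induction p with
  | nil => rfl
  | cons hadj _ ih => exact (h _ _ hadj).trans ih

section FiniteSubtree

open Finset

/-- `D` lists the tree darts leaving `W`; the bound is the handshake lemma for the finite tree
`T[W]`, which has `#W - 1` edges. -/
theorem IsAcyclic.sum_ncard_neighborSet_add_two_le {T : SimpleGraph V} (hT : T.IsAcyclic)
    {W : Finset V} (hW : (T.induce (W : Set V)).Connected) {D : Finset (V × V)}
    (hD : ∀ v ∈ W, ∀ z, T.Adj v z → z ∉ W → (v, z) ∈ D) :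
    ∑ v ∈ W, (T.neighborSet v).ncard + 2 ≤ 2 * #W + #D := by
  classical
  set TW := T.induce (W : Set V)
  have hvertex (x : (W : Set V)) :
      (T.neighborSet x).ncard ≤ TW.degree x + #{d ∈ D | d.1 = (x : V)} := by
    have hin : T.neighborSet x ∩ W = Subtype.val '' TW.neighborSet x := by
      ext z
      simp only [Set.mem_inter_iff, mem_neighborSet, Set.mem_image, comap_adj,
        Function.Embedding.coe_subtype, Subtype.exists, exists_and_right, exists_eq_right, TW]
      aesop
    have hout : T.neighborSet x \ W ⊆ ({d ∈ D | d.1 = (x : V)}.image Prod.snd : Set V) := by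
      rintro z ⟨hxz, hzW⟩
      simpa using hD x x.2 z hxz hzW
    calc (T.neighborSet x).ncard
        ≤ (T.neighborSet x ∩ W).ncard + (T.neighborSet x \ W).ncard := by
          conv_lhs => rw [← Set.inter_union_sdiff (T.neighborSet x) W]
          exact Set.ncard_union_le _ _
      _ ≤ TW.degree x + #{d ∈ D | d.1 = (x : V)} := by
          gcongr
          · rw [hin, Set.ncard_image_of_injective _ Subtype.val_injective,
              ← Nat.card_coe_set_eq, Nat.card_eq_fintype_card, card_neighborSet_eq_degree]
          · exact (Set.ncard_le_ncard hout (finite_toSet _)).trans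
              ((Set.ncard_coe_finset _).trans_le card_image_le)
  have htree : TW.IsTree := ⟨hW, hT.induce _⟩
  have hedges := htree.card_edgeFinset
  have hdeg := TW.sum_degrees_eq_twice_card_edges
  have hexits : ∑ v ∈ W, #{d ∈ D | d.1 = v} ≤ #D :=
    (sum_card_fiberwise_eq_card_filter D W Prod.fst).trans_le (card_filter_le _ _)
  have hsum := sum_le_sum fun x (_ : x ∈ univ) => hvertex x
  rw [sum_add_distrib, sum_finset_coe (fun v => (T.neighborSet v).ncard),
    sum_finset_coe (fun v => #{d ∈ D | d.1 = v})] at hsum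
  have hcard : Fintype.card (W : Set V) = #W := by simp
  omega

theorem IsAcyclic.infinite_of_forall_exit_eq {T : SimpleGraph V} (hT : T.IsAcyclic)
    {W : Set V} (hW : (T.induce W).Connected) (hdeg : ∀ v ∈ W, 2 ≤ (T.neighborSet v).ncard)
    {a b : V} (hexit : ∀ v ∈ W, ∀ z, T.Adj v z → z ∉ W → v = a ∧ z = b) : W.Infinite := by
  intro hfin
  obtain ⟨W, rfl⟩ := hfin.exists_finset_coe
  have hsum := hT.sum_ncard_neighborSet_add_two_le hW (D := {(a, b)})
    fun v hv z hvz hz => by simpa using hexit v hv z hvz hz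
  have := card_nsmul_le_sum W _ 2 hdeg
  simp only [card_singleton, smul_eq_mul] at hsum this
  omega

theorem IsAcyclic.ncard_neighborSet_eq_two {T : SimpleGraph V} (hT : T.IsAcyclic)
    {W : Set V} (hW : (T.induce W).Connected) (hfin : W.Finite)
    (hdeg : ∀ v ∈ W, 2 ≤ (T.neighborSet v).ncard) {a b c d : V}
    (hexit : ∀ v ∈ W, ∀ z, T.Adj v z → z ∉ W → v = a ∧ z = b ∨ v = c ∧ z = d) :
    ∀ v ∈ W, (T.neighborSet v).ncard = 2 := by
  classical
  obtain ⟨W, rfl⟩ := hfin.exists_finset_coe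
  have hsum := hT.sum_ncard_neighborSet_add_two_le hW (D := {(a, b), (c, d)})
    fun v hv z hvz hz => by simpa using hexit v hv z hvz hz
  have hD : #{(a, b), (c, d)} ≤ 2 := card_insert_le _ _
  have := card_nsmul_le_sum W _ 2 hdeg
  rw [smul_eq_mul] at this
  have heq := (sum_eq_sum_iff_of_le hdeg).mp (by rw [sum_const_nat fun _ _ => rfl]; omega)
  exact fun v hv => (heq v hv).symm

end FiniteSubtree

theorem connected_induce_setOf_reachable {H T : SimpleGraph V} (hHT : H ≤ T) (w : V) :
    (T.induce {z | H.Reachable w z}).Connected := by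
  have hsupp : (H.connectedComponentMk w).supp = {z | H.Reachable w z} := by
    ext z
    simp [ConnectedComponent.mem_supp_iff, ConnectedComponent.eq, reachable_comm]
  exact ((ConnectedComponent.maximal_connected_induce_iff _).mpr ⟨_, hsupp⟩).prop.mono
    fun _ _ h => hHT h

theorem IsAcyclic.support_subset_of_connected_induce {T : SimpleGraph V} (hT : T.IsAcyclic)
    {W : Set V} (hW : (T.induce W).Connected) {v w : V} (hv : v ∈ W) (hw : w ∈ W)
    (p : T.Walk v w) (hp : p.IsPath) : ∀ z ∈ p.support, z ∈ W := by
  classical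
  obtain ⟨q⟩ := hW.preconnected ⟨v, hv⟩ ⟨w, hw⟩
  have hpq : (⟨p, hp⟩ : T.Path v w) = (q.map (Embedding.induce W).toHom).toPath :=
    (hT.subsingleton_path v w).elim _ _
  intro z hz
  have hz' := Walk.support_toPath_subset_support (q.map (Embedding.induce W).toHom)
    (by rw [← hpq]; exact hz)
  rw [Walk.support_map, List.mem_map] at hz'
  obtain ⟨z', -, rfl⟩ := hz'
  exact z'.2

section Ends

variable {G : SimpleGraph V} [G.LocallyFinite]

theorem exists_infinite_componentCompl_inter_nonempty (hG : G.Preconnected) (K : Finset V)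
    {W : Set V} (hW : W.Infinite) :
    ∃ C : G.ComponentCompl K, C.supp.Infinite ∧ (C.supp ∩ W).Nonempty := by
  have : Fact G.Preconnected := ⟨hG⟩
  have : Finite (G.ComponentCompl K) := G.componentCompl_finite K
  by_contra! h
  have hcover : W ⊆ K ∪ ⋃ C : G.ComponentCompl K, C.supp ∩ W := fun v hv =>
    (em (v ∈ K)).imp id fun hvK =>
      Set.mem_iUnion.mpr ⟨G.componentComplMk hvK, G.componentComplMk_mem hvK, hv⟩
  refine hW ((K.finite_toSet.union (Set.finite_iUnion fun C => ?_)).subset hcover)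
  by_cases hC : C.supp.Infinite
  · simp [h C hC]
  · exact (Set.not_infinite.mp hC).inter_of_left W

theorem exists_end_eq (hG : G.Preconnected) (K : Finset V) (C : G.ComponentCompl K)
    (hC : C.supp.Infinite) : ∃ s ∈ G.end, s (Opposite.op K) = C := by
  have : Fact G.Preconnected := ⟨hG⟩
  have : Infinite V := Set.infinite_univ_iff.mp (hC.mono (Set.subset_univ _))
  have : ∀ j : (Finset V)ᵒᵖ, Finite (G.componentComplFunctor.obj j) :=
    fun j => G.componentCompl_finite j.unop
  have : ∀ j : (Finset V)ᵒᵖ, Nonempty (G.componentComplFunctor.obj j) :=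
    fun j => G.componentCompl_nonempty_of_infinite j.unop
  have hML : G.componentComplFunctor.IsMittagLeffler :=
    CategoryTheory.Functor.isMittagLeffler_of_exists_finite_range _
      fun j => ⟨j, CategoryTheory.CategoryStruct.id j, Set.toFinite _⟩
  have : ∀ j, Nonempty (G.componentComplFunctor.toEventualRanges.obj j) :=
    G.componentComplFunctor.toEventualRanges_nonempty hML
  obtain ⟨s, hs⟩ := CategoryTheory.Functor.eval_section_surjective_of_surjective
    (F := G.componentComplFunctor.toEventualRanges)
    (G.componentComplFunctor.surjective_toEventualRanges hML) (Opposite.op K)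
    ⟨C, (G.infinite_iff_in_eventualRange C).mp hC⟩
  exact ⟨_, (G.componentComplFunctor.toEventualRangesSectionsEquiv s).2,
    congrArg Subtype.val hs⟩

theorem reachable_deleteEdges_of_infinite (hG : G.Preconnected) (hend : G.end.Subsingleton)
    {S : Set (Sym2 V)} (K : Finset V) (hK : ∀ x y, s(x, y) ∈ S → x ∈ K) {u v : V}
    (hu : {w | (G.deleteEdges S).Reachable u w}.Infinite)
    (hv : {w | (G.deleteEdges S).Reachable v w}.Infinite) :
    (G.deleteEdges S).Reachable u v := by
  have hcomp (C : G.ComponentCompl K) {x y : V} (hx : x ∈ C) (hy : y ∈ C) :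
      (G.deleteEdges S).Reachable x y := by
    obtain ⟨hxK, rfl⟩ := hx
    obtain ⟨hyK, hy⟩ := hy
    let φ : G.induce (K : Set V)ᶜ →g G.deleteEdges S :=
      { toFun := Subtype.val
        map_rel' := fun {x _} h => (deleteEdges_adj ..).mpr ⟨h, fun hS => x.2 (hK _ _ hS)⟩ }
    exact (ConnectedComponent.exact hy.symm).map φ
  obtain ⟨C, hC, x, hxC, hux⟩ := exists_infinite_componentCompl_inter_nonempty hG K hu
  obtain ⟨D, hD, y, hyD, hvy⟩ := exists_infinite_componentCompl_inter_nonempty hG K hv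
  obtain ⟨s, hs, rfl⟩ := exists_end_eq hG K C hC
  obtain ⟨t, ht, rfl⟩ := exists_end_eq hG K D hD
  rw [hend hs ht] at hxC
  exact hux.trans ((hcomp _ hxC hyD).trans hvy.symm)

end Ends

section SpanningTree

variable {G T : SimpleGraph V}

theorem IsAcyclic.infinite_reachable_deleteEdges_outer (hT : T.IsAcyclic)
    (hdeg : ∀ v, 2 ≤ (T.neighborSet v).ncard) {a b c d : V} (hab : T.Adj a b) (hcd : T.Adj c d)
    (hne : s(a, b) ≠ s(c, d)) (hbc : (T.deleteEdges {s(a, b), s(c, d)}).Reachable b c) :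
    {z | (T.deleteEdges {s(a, b), s(c, d)}).Reachable a z}.Infinite := by
  have hbridge : ¬ (T.deleteEdges {s(a, b)}).Reachable a b :=
    isAcyclic_iff_forall_adj_isBridge.mp hT hab
  have hsub : T.deleteEdges {s(a, b), s(c, d)} ≤ T.deleteEdges {s(a, b)} :=
    deleteEdges_anti (by simp)
  have hac : ¬ (T.deleteEdges {s(a, b), s(c, d)}).Reachable a c := fun h =>
    hbridge ((h.trans hbc.symm).mono hsub)
  have had : ¬ (T.deleteEdges {s(a, b), s(c, d)}).Reachable a d := fun h =>
    hbridge ((h.mono hsub).trans (Adj.reachable ((deleteEdges_adj ..).mpr ⟨hcd.symm, by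
      simpa [Sym2.eq_swap] using hne.symm⟩)) |>.trans (hbc.symm.mono hsub))
  refine hT.infinite_of_forall_exit_eq (connected_induce_setOf_reachable (deleteEdges_le _) a)
    (fun v _ => hdeg v) (a := a) (b := b) fun v hv z hvz hz => ?_
  have hS : s(v, z) ∈ ({s(a, b), s(c, d)} : Set (Sym2 V)) := by
    by_contra hS
    exact hz (Reachable.trans hv ((deleteEdges_adj ..).mpr ⟨hvz, hS⟩).reachable)
  simp only [Set.mem_insert_iff, Set.mem_singleton_iff, Sym2.eq_iff] at hS
  rcases hS with (⟨rfl, rfl⟩ | ⟨rfl, rfl⟩) | (⟨rfl, rfl⟩ | ⟨rfl, rfl⟩)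
  · exact ⟨rfl, rfl⟩
  · exact (hz .rfl).elim
  · exact absurd hv hac
  · exact absurd hv had

theorem infinite_reachable_deleteEdges_middle (hTG : T ≤ G) (hTconn : T.Connected)
    (hT : T.IsAcyclic) (hdeg : ∀ v, 2 ≤ (T.neighborSet v).ncard)
    (hdeg2 : ∀ v : V, (T.neighborSet v).ncard = 2 →
      ∃ y : V, G.Adj v y ∧ ¬ T.Adj v y ∧
        ∃ p : T.Walk v y, p.IsPath ∧ ∃ w ∈ p.support, 3 ≤ (T.neighborSet w).ncard)
    {a b c d : V} (hab : T.Adj a b) (hcd : T.Adj c d)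
    (hbc : (T.deleteEdges {s(a, b), s(c, d)}).Reachable b c)
    (had : (G.deleteEdges {s(a, b), s(c, d)}).Reachable a d)
    (hnot : ¬ (G.deleteEdges {s(a, b), s(c, d)}).Reachable a b) :
    {z | (T.deleteEdges {s(a, b), s(c, d)}).Reachable b z}.Infinite := by
  set S : Set (Sym2 V) := {s(a, b), s(c, d)} with hS
  have hTH : T.deleteEdges S ≤ G.deleteEdges S := deleteEdges_mono hTG
  intro hfin
  have hM := connected_induce_setOf_reachable (deleteEdges_le (G := T) S) b
  have htwo := hT.ncard_neighborSet_eq_two hM hfin (fun v _ => hdeg v) (a := b) (b := a) (c := c)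
    (d := d) fun v hv z hvz hz => by
      have hvzS : s(v, z) ∈ S := by
        by_contra h
        exact hz (Reachable.trans hv ((deleteEdges_adj ..).mpr ⟨hvz, h⟩).reachable)
      simp only [hS, Set.mem_insert_iff, Set.mem_singleton_iff, Sym2.eq_iff] at hvzS
      rcases hvzS with (⟨rfl, rfl⟩ | ⟨rfl, rfl⟩) | (⟨rfl, rfl⟩ | ⟨rfl, rfl⟩)
      · exact (hz .rfl).elim
      · exact .inl ⟨rfl, rfl⟩
      · exact .inr ⟨rfl, rfl⟩
      · exact (hz hbc).elim
  obtain ⟨y, hby, hTby, p, hp, w, hw, hw3⟩ := hdeg2 b (htwo b .rfl)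
  have hST : ∀ t ∈ S, t ∈ T.edgeSet := by
    rintro t (rfl | rfl)
    exacts [hab, hcd]
  have hHby : (G.deleteEdges S).Adj b y :=
    (deleteEdges_adj ..).mpr ⟨hby, fun h => hTby (hST _ h)⟩
  -- every vertex outside the middle piece is joined to `a` in `G - S`
  have hyM : (T.deleteEdges S).Reachable b y := by
    rcases (hTconn.preconnected y a).some.reachable_deleteEdges_or_exists S with
      h | ⟨x, x', hx, h⟩
    · exact (hnot (hHby.reachable.trans (h.mono hTH)).symm).elim
    obtain rfl | rfl | rfl | rfl : x = a ∨ x = b ∨ x = c ∨ x = d := by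
      simp only [hS, Set.mem_insert_iff, Set.mem_singleton_iff, Sym2.eq_iff] at hx
      tauto
    · exact (hnot (hHby.reachable.trans (h.mono hTH)).symm).elim
    · exact h.symm
    · exact hbc.trans h.symm
    · exact (hnot (hHby.reachable.trans ((h.mono hTH).trans had.symm)).symm).elim
  have := htwo w (hT.support_subset_of_connected_induce hM .rfl hyM p hp w hw)
  omega

theorem reachable_deleteEdges_of_reachable_ends [G.LocallyFinite] (hG : G.Preconnected)
    (hend : G.end.Subsingleton) (hTG : T ≤ G) (hTconn : T.Connected) (hT : T.IsAcyclic)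
    (hdeg : ∀ v, 2 ≤ (T.neighborSet v).ncard)
    (hdeg2 : ∀ v : V, (T.neighborSet v).ncard = 2 →
      ∃ y : V, G.Adj v y ∧ ¬ T.Adj v y ∧
        ∃ p : T.Walk v y, p.IsPath ∧ ∃ w ∈ p.support, 3 ≤ (T.neighborSet w).ncard)
    {a b c d : V} (hab : T.Adj a b) (hcd : T.Adj c d) (hne : s(a, b) ≠ s(c, d))
    (hbc : (T.deleteEdges {s(a, b), s(c, d)}).Reachable b c)
    (had : (G.deleteEdges {s(a, b), s(c, d)}).Reachable a d) :
    (G.deleteEdges {s(a, b), s(c, d)}).Reachable a b := by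
  classical
  by_contra hnot
  have hTH : T.deleteEdges {s(a, b), s(c, d)} ≤ G.deleteEdges {s(a, b), s(c, d)} :=
    deleteEdges_mono hTG
  refine hnot (reachable_deleteEdges_of_infinite hG hend {a, b, c, d} (by grind) ?_ ?_)
  · exact (hT.infinite_reachable_deleteEdges_outer hdeg hab hcd hne hbc).mono
      fun z hz => hz.mono hTH
  · exact (infinite_reachable_deleteEdges_middle hTG hTconn hT hdeg hdeg2 hab hcd hbc had
      hnot).mono fun z hz => hz.mono hTH

theorem reachable_deleteEdges_pair_of_adj [G.LocallyFinite] (hG : G.Preconnected)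
    (hend : G.end.Subsingleton) (hTG : T ≤ G) (hTconn : T.Connected) (hT : T.IsAcyclic)
    (hdeg : ∀ v, 2 ≤ (T.neighborSet v).ncard)
    (hcore : ∀ e ∈ T.edgeSet,
      {f : Sym2 V | f ∈ G.edgeSet ∧ f ∉ T.edgeSet ∧
        ∃ x y : V, f = s(x, y) ∧ ∃ p : T.Walk x y, p.IsPath ∧ e ∈ p.edges}.Infinite)
    (hdeg2 : ∀ v : V, (T.neighborSet v).ncard = 2 →
      ∃ y : V, G.Adj v y ∧ ¬ T.Adj v y ∧
        ∃ p : T.Walk v y, p.IsPath ∧ ∃ w ∈ p.support, 3 ≤ (T.neighborSet w).ncard)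
    {a b : V} (hab : T.Adj a b) (f : Sym2 V) :
    (G.deleteEdges {s(a, b), f}).Reachable a b := by
  obtain ⟨g, ⟨hgG, hgT, x, y, rfl, p, hp, hep⟩, hgf⟩ :=
    ((hcore s(a, b) hab).sdiff (Set.finite_singleton f)).nonempty
  have hxy : (G.deleteEdges {s(a, b), f}).Reachable x y := by
    refine ((deleteEdges_adj ..).mpr ⟨hgG, ?_⟩).reachable
    rintro (h | h)
    exacts [hgT (h ▸ hab), hgf h]
  by_cases hf : f ∈ p.edges ∧ f ≠ s(a, b)
  swap
  · exact reachable_deleteEdges_of_mem_edges hTG p hp.edges_nodup hep (by grind) hxy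
  obtain ⟨a', b', c', d', he, rfl, hbc, hout⟩ :=
    p.exists_reachable_deleteEdges_pair hp.edges_nodup hep hf.1 hf.2.symm
  rw [he] at hf hxy hbc hout ⊢
  have hab' : T.Adj a' b' := by rw [← mem_edgeSet, ← he]; exact hab
  have hTH : T.deleteEdges {s(a', b'), s(c', d')} ≤ G.deleteEdges {s(a', b'), s(c', d')} :=
    deleteEdges_mono hTG
  have had : (G.deleteEdges {s(a', b'), s(c', d')}).Reachable a' d' := by
    rcases hout with ⟨hxa, hdy⟩ | ⟨hya, hdx⟩
    · exact (hxa.mono hTH).symm.trans (hxy.trans (hdy.mono hTH).symm)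
    · exact (hya.mono hTH).symm.trans (hxy.symm.trans (hdx.mono hTH).symm)
  have key := reachable_deleteEdges_of_reachable_ends hG hend hTG hTconn hT hdeg hdeg2 hab'
    (p.edges_subset_edgeSet hf.1) hf.2.symm hbc had
  rcases Sym2.eq_iff.mp he with ⟨rfl, rfl⟩ | ⟨rfl, rfl⟩
  exacts [key, key.symm]

end SpanningTree

end SimpleGraph

theorem stmt5_general {V : Type*} (G : SimpleGraph V)
    (hconn : G.Connected) (hlf : ∀ v : V, (G.neighborSet v).Finite)
    (hend : G.end.Nonempty ∧ G.end.Subsingleton)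
    (T : SimpleGraph V) (hTG : T ≤ G) (hTconn : T.Connected) (hTacyc : T.IsAcyclic)
    (hdeg : ∀ v : V, 2 ≤ (T.neighborSet v).ncard)
    (hcore : ∀ e ∈ T.edgeSet,
      {f : Sym2 V | f ∈ G.edgeSet ∧ f ∉ T.edgeSet ∧
        ∃ x y : V, f = s(x, y) ∧
          ∃ p : T.Walk x y, p.IsPath ∧ e ∈ p.edges}.Infinite)
    (hdeg2 : ∀ v : V, (T.neighborSet v).ncard = 2 →
      ∃ y : V, G.Adj v y ∧ ¬ T.Adj v y ∧
        ∃ p : T.Walk v y, p.IsPath ∧ ∃ w ∈ p.support, 3 ≤ (T.neighborSet w).ncard) :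
    ∀ u v : V, ∀ e ∈ G.edgeSet, ∀ f ∈ G.edgeSet,
      (G.deleteEdges {e, f}).Reachable u v := by
  have : G.LocallyFinite := fun v => (hlf v).fintype
  intro u v e _ f _
  refine (hTconn.preconnected u v).of_forall_adj fun x y hxy => ?_
  by_cases hS : s(x, y) ∈ ({e, f} : Set (Sym2 V))
  · rcases hS with rfl | rfl
    · exact reachable_deleteEdges_pair_of_adj hconn.preconnected hend.2 hTG hTconn hTacyc hdeg
        hcore hdeg2 hxy f
    · rw [Set.pair_comm]
      exact reachable_deleteEdges_pair_of_adj hconn.preconnected hend.2 hTG hTconn hTacyc hdeg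
        hcore hdeg2 hxy e
  · exact ((deleteEdges_adj ..).mpr ⟨hTG hxy, hS⟩).reachable

/-- Let `T` be a spanning tree of an infinite, connected, locally finite,
one-ended graph `G` such that: (i) every vertex has `T`-degree at least 2; (ii) every
edge of `T` lies in infinitely many fundamental cycles; (iii) every vertex of `T`-degree
exactly 2 is incident to a non-tree edge of `G` whose fundamental cycle meets a vertex of
`T`-degree at least 3. Then `G` is 3-edge-connected. -/
theorem stmt5 {V : Type*} [Infinite V] (G : SimpleGraph V)
    (hconn : G.Connected) (hlf : ∀ v : V, (G.neighborSet v).Finite)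
    (hend : G.end.Nonempty ∧ G.end.Subsingleton)
    (T : SimpleGraph V) (hTG : T ≤ G) (hTconn : T.Connected) (hTacyc : T.IsAcyclic)
    (hdeg : ∀ v : V, 2 ≤ (T.neighborSet v).ncard)
    (hcore : ∀ e ∈ T.edgeSet,
      {f : Sym2 V | f ∈ G.edgeSet ∧ f ∉ T.edgeSet ∧
        ∃ x y : V, f = s(x, y) ∧
          ∃ p : T.Walk x y, p.IsPath ∧ e ∈ p.edges}.Infinite)
    (hdeg2 : ∀ v : V, (T.neighborSet v).ncard = 2 →
      ∃ y : V, G.Adj v y ∧ ¬ T.Adj v y ∧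
        ∃ p : T.Walk v y, p.IsPath ∧ ∃ w ∈ p.support, 3 ≤ (T.neighborSet w).ncard) :
    ∀ u v : V, ∀ e ∈ G.edgeSet, ∀ f ∈ G.edgeSet,
      (G.deleteEdges {e, f}).Reachable u v :=
  stmt5_general G hconn hlf hend T hTG hTconn hTacyc hdeg hcore hdeg2
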